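/- Let u_n ⇀ u weakly in H¹(D) on a bounded open set D ⊂ ℝ^d, suppose ‖∇u_n‖_{L²(Ω_n)} → 0 where Ω_n ⊆ D are measurable sets with χ_{Ω_n} → χ_Ω strongly in L²(D), and suppose u_n = ũ_n on Ω_n where ũ_n ⇀ v weakly in H¹(D). Then ∫_Ω φ ∇v dx = 0 for every φ ∈ C_c^∞(D), hence ∇v = 0 a.e. on Ω. -/

import Mathlib

open MeasureTheory Filter Topology Set

section Helpers

variable {α : Type*} [MeasurableSpace α] {μ : Measure α}
  {E : Type*} [NormedAddCommGroup E] [InnerProductSpace ℝ E] {f g : α → E}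

private lemma aux_inner_toLp (hf : MemLp f 2 μ) (hg : MemLp g 2 μ) :
    (inner ℝ (hf.toLp f) (hg.toLp g) : ℝ) = ∫ x, inner ℝ (f x) (g x) ∂μ := by
  rw [MeasureTheory.L2.inner_def]
  refine integral_congr_ae ?_
  filter_upwards [hf.coeFn_toLp, hg.coeFn_toLp] with x h1 h2
  rw [h1, h2]

private lemma aux_integrable_inner (hf : MemLp f 2 μ) (hg : MemLp g 2 μ) :
    Integrable (fun x => (inner ℝ (f x) (g x) : ℝ)) μ := by
  refine (MeasureTheory.L2.integrable_inner (𝕜 := ℝ) (hf.toLp f) (hg.toLp g)).congr ?_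
  filter_upwards [hf.coeFn_toLp, hg.coeFn_toLp] with x h1 h2
  rw [h1, h2]

private lemma aux_norm_toLp_sq (hf : MemLp f 2 μ) :
    ‖hf.toLp f‖ ^ 2 = ∫ x, ‖f x‖ ^ 2 ∂μ := by
  rw [← real_inner_self_eq_norm_sq, aux_inner_toLp hf hf]
  exact integral_congr_ae (Eventually.of_forall fun x => real_inner_self_eq_norm_sq _)

end Helpers

set_option maxHeartbeats 1000000 in
/-- If `ũ_n ⇀ v` weakly in `H¹(D)` (weak `L²` convergence of the gradients),
`‖∇ũ_n‖_{L²(Ω_n)} → 0`, and `χ_{Ω_n} → χ_Ω` strongly in `L²(D)`, then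
`∫_Ω φ ∇v = 0` for every test function `φ`, hence `∇v = 0` a.e. on `Ω`. -/
theorem gradient_vanishes_on_limit_set
    {d : ℕ} (D : Set (EuclideanSpace ℝ (Fin d)))
    (hD : IsOpen D) (hDb : Bornology.IsBounded D)
    (Ωn : ℕ → Set (EuclideanSpace ℝ (Fin d))) (Ω : Set (EuclideanSpace ℝ (Fin d)))
    (hΩn : ∀ n, MeasurableSet (Ωn n)) (hΩnD : ∀ n, Ωn n ⊆ D)
    (hΩ : MeasurableSet Ω) (hΩD : Ω ⊆ D)
    (un : ℕ → EuclideanSpace ℝ (Fin d) → ℝ) (v : EuclideanSpace ℝ (Fin d) → ℝ)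
    (gn : ℕ → EuclideanSpace ℝ (Fin d) → EuclideanSpace ℝ (Fin d))
    (gv : EuclideanSpace ℝ (Fin d) → EuclideanSpace ℝ (Fin d))
    (hun : ∀ n, MemLp (un n) 2 (volume.restrict D)) (hv : MemLp v 2 (volume.restrict D))
    (hgn : ∀ n, MemLp (gn n) 2 (volume.restrict D)) (hgv : MemLp gv 2 (volume.restrict D))
    -- `gn n` is the weak gradient of `ũ_n` on `D`, `gv` that of `v`
    (hgrad : ∀ n, ∀ φ : EuclideanSpace ℝ (Fin d) → ℝ, ContDiff ℝ (⊤ : ℕ∞) φ →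
      HasCompactSupport φ → tsupport φ ⊆ D →
      ∫ x, un n x • gradient φ x ∂(volume.restrict D)
        = -∫ x, φ x • gn n x ∂(volume.restrict D))
    (hgradv : ∀ φ : EuclideanSpace ℝ (Fin d) → ℝ, ContDiff ℝ (⊤ : ℕ∞) φ →
      HasCompactSupport φ → tsupport φ ⊆ D →
      ∫ x, v x • gradient φ x ∂(volume.restrict D)
        = -∫ x, φ x • gv x ∂(volume.restrict D))
    -- weak `H¹(D)` convergence `ũ_n ⇀ v`: weak `L²` convergence of functions and gradients
    (hweak_u : ∀ w : EuclideanSpace ℝ (Fin d) → ℝ, MemLp w 2 (volume.restrict D) →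
      Tendsto (fun n => ∫ x, un n x * w x ∂(volume.restrict D)) atTop
        (𝓝 (∫ x, v x * w x ∂(volume.restrict D))))
    (hweak_g : ∀ W : EuclideanSpace ℝ (Fin d) → EuclideanSpace ℝ (Fin d),
      MemLp W 2 (volume.restrict D) →
      Tendsto (fun n => ∫ x, inner ℝ (gn n x) (W x) ∂(volume.restrict D)) atTop
        (𝓝 (∫ x, inner ℝ (gv x) (W x) ∂(volume.restrict D) : ℝ)))
    -- `‖∇ũ_n‖_{L²(Ω_n)} → 0`
    (hsmall : Tendsto (fun n => ∫ x in Ωn n, ‖gn n x‖ ^ 2 ∂(volume.restrict D)) atTop (𝓝 0))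
    -- `χ_{Ω_n} → χ_Ω` strongly in `L²(D)`
    (hchi : Tendsto (fun n => ∫ x, ((Ωn n).indicator (fun _ => (1 : ℝ)) x
        - Ω.indicator (fun _ => (1 : ℝ)) x) ^ 2 ∂(volume.restrict D)) atTop (𝓝 0)) :
    (∀ φ : EuclideanSpace ℝ (Fin d) → ℝ, ContDiff ℝ (⊤ : ℕ∞) φ → HasCompactSupport φ →
      tsupport φ ⊆ D → ∫ x in Ω, φ x • gv x ∂(volume.restrict D) = 0) ∧
    (∀ᵐ x ∂(volume.restrict D), x ∈ Ω → gv x = 0) := by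
  set μ : Measure (EuclideanSpace ℝ (Fin d)) := volume.restrict D with hμdef
  haveI : IsFiniteMeasure μ := by
    constructor
    rw [hμdef, Measure.restrict_apply_univ]
    exact hDb.measure_lt_top
  -- notation for indicators
  set χ : EuclideanSpace ℝ (Fin d) → ℝ := Ω.indicator (fun _ => (1 : ℝ)) with hχdef
  set χn : ℕ → EuclideanSpace ℝ (Fin d) → ℝ := fun n => (Ωn n).indicator (fun _ => (1 : ℝ)) with hχndef
  -- the Lp elements corresponding to the gradients
  set Fn : ℕ → Lp (EuclideanSpace ℝ (Fin d)) 2 μ := fun n => (hgn n).toLp (gn n) with hFndef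
  -- Step 1: uniform bound on ‖gn n‖_{L²} via Banach–Steinhaus
  obtain ⟨C, hC⟩ : ∃ C, ∀ n, ‖Fn n‖ ≤ C := by
    have hbs := banach_steinhaus (g := fun n => (innerSL ℝ (Fn n))) ?_
    · obtain ⟨C, hC⟩ := hbs
      exact ⟨C, fun n => by simpa [innerSL_apply_norm] using hC n⟩
    · intro W
      have hWmem : MemLp (W : EuclideanSpace ℝ (Fin d) → EuclideanSpace ℝ (Fin d)) 2 μ := Lp.memLp W
      have htd := hweak_g (W : EuclideanSpace ℝ (Fin d) → EuclideanSpace ℝ (Fin d)) hWmem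
      have heq : ∀ n, (innerSL ℝ (Fn n)) W = ∫ x, inner ℝ (gn n x) (W x : EuclideanSpace ℝ (Fin d)) ∂μ := by
        intro n
        have : (inner ℝ ((hgn n).toLp (gn n)) (hWmem.toLp (W : EuclideanSpace ℝ (Fin d) → EuclideanSpace ℝ (Fin d))) : ℝ)
            = ∫ x, inner ℝ (gn n x) (W x : EuclideanSpace ℝ (Fin d)) ∂μ := aux_inner_toLp _ _
        rw [MeasureTheory.Lp.toLp_coeFn W hWmem] at this
        simpa [hFndef] using this
      have habs : Tendsto (fun n => |(innerSL ℝ (Fn n)) W|) atTop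
          (𝓝 |∫ x, inner ℝ (gv x) (W x : EuclideanSpace ℝ (Fin d)) ∂μ|) := by
        simp_rw [heq]; exact htd.abs
      obtain ⟨B, hB⟩ := habs.bddAbove_range
      refine ⟨B, fun n => ?_⟩
      have := hB (Set.mem_range_self n)
      calc ‖(innerSL ℝ (Fn n)) W‖ = |(innerSL ℝ (Fn n)) W| := rfl
        _ ≤ B := this
  have hC0 : (0 : ℝ) ≤ C := le_trans (norm_nonneg _) (hC 0)
  -- Step 2: key vanishing statement for bounded continuous test functions
  have key : ∀ φ : EuclideanSpace ℝ (Fin d) → ℝ, Continuous φ → ∀ M : ℝ, (∀ x, |φ x| ≤ M) →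
      ∫ x in Ω, φ x • gv x ∂μ = 0 := by
    intro φ hφc M hM
    have hM0 : (0 : ℝ) ≤ M := le_trans (abs_nonneg _) (hM 0)
    -- it suffices to show all inner products with fixed vectors vanish
    suffices hy : ∀ y : EuclideanSpace ℝ (Fin d), (inner ℝ (∫ x in Ω, φ x • gv x ∂μ) y : ℝ) = 0 by
      have h := hy (∫ x in Ω, φ x • gv x ∂μ)
      rw [real_inner_self_eq_norm_sq] at h
      exact norm_eq_zero.mp (sq_eq_zero_iff.mp h)
    intro y
    -- integrability of the integrand
    have hgvi : Integrable gv μ := hgv.integrable one_le_two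
    have hint : Integrable (fun x => φ x • gv x) (μ.restrict Ω) := by
      refine Integrable.smul_of_top_right (φ := φ) (hgvi.restrict) ?_
      exact memLp_top_of_bound (hφc.aestronglyMeasurable) M
        (Eventually.of_forall fun x => hM x)
    -- the test field W
    set W : EuclideanSpace ℝ (Fin d) → EuclideanSpace ℝ (Fin d) := fun x => (χ x * φ x) • y with hWdef
    have hχmeas : Measurable χ := measurable_const.indicator hΩ
    have hχnmeas : ∀ n, Measurable (χn n) := fun n => measurable_const.indicator (hΩn n)
    have hχbd : ∀ x, |χ x| ≤ 1 := by
      intro x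
      rw [hχdef]
      by_cases hx : x ∈ Ω <;> simp [Set.indicator_of_mem, Set.indicator_of_notMem, hx]
    have hχnbd : ∀ n x, |χn n x| ≤ 1 := by
      intro n x
      rw [hχndef]
      by_cases hx : x ∈ Ωn n <;> simp [Set.indicator_of_mem, Set.indicator_of_notMem, hx]
    have hWmem : MemLp W 2 μ := by
      refine MemLp.of_bound ?_ (M * ‖y‖) (Eventually.of_forall fun x => ?_)
      · exact (((hχmeas.mul hφc.measurable).smul_const y).aestronglyMeasurable)
      · rw [hWdef]
        simp only [norm_smul, Real.norm_eq_abs]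
        refine mul_le_mul_of_nonneg_right ?_ (norm_nonneg y)
        calc |χ x * φ x| = |χ x| * |φ x| := abs_mul _ _
          _ ≤ 1 * M := mul_le_mul (hχbd x) (hM x) (abs_nonneg _) zero_le_one
          _ = M := one_mul M
    -- the splitting pieces
    set vn : ℕ → EuclideanSpace ℝ (Fin d) → EuclideanSpace ℝ (Fin d) := fun n x => (χn n x * φ x) • y with hvndef
    set rn : ℕ → EuclideanSpace ℝ (Fin d) → EuclideanSpace ℝ (Fin d) := fun n x => ((χ x - χn n x) * φ x) • y with hrndef
    have hvnmem : ∀ n, MemLp (vn n) 2 μ := by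
      intro n
      refine MemLp.of_bound ?_ (M * ‖y‖) (Eventually.of_forall fun x => ?_)
      · exact ((((hχnmeas n).mul hφc.measurable).smul_const y).aestronglyMeasurable)
      · simp only [hvndef, norm_smul, Real.norm_eq_abs]
        refine mul_le_mul_of_nonneg_right ?_ (norm_nonneg y)
        calc |χn n x * φ x| = |χn n x| * |φ x| := abs_mul _ _
          _ ≤ 1 * M := mul_le_mul (hχnbd n x) (hM x) (abs_nonneg _) zero_le_one
          _ = M := one_mul M
    have hrnmem : ∀ n, MemLp (rn n) 2 μ := by
      intro n
      refine MemLp.of_bound ?_ (2 * M * ‖y‖) (Eventually.of_forall fun x => ?_)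
      · exact ((((hχmeas.sub (hχnmeas n)).mul hφc.measurable).smul_const y).aestronglyMeasurable)
      · simp only [hrndef, norm_smul, Real.norm_eq_abs]
        refine mul_le_mul_of_nonneg_right ?_ (norm_nonneg y)
        calc |(χ x - χn n x) * φ x| = |χ x - χn n x| * |φ x| := abs_mul _ _
          _ ≤ 2 * M := by
              have h1 : |χ x - χn n x| ≤ 2 := by
                calc |χ x - χn n x| ≤ |χ x| + |χn n x| := abs_sub _ _
                  _ ≤ 1 + 1 := add_le_add (hχbd x) (hχnbd n x)
                  _ = 2 := by norm_num
              exact mul_le_mul h1 (hM x) (abs_nonneg _) (by norm_num)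
    -- indicator version of gn over Ωn
    set hn : ℕ → EuclideanSpace ℝ (Fin d) → EuclideanSpace ℝ (Fin d) := fun n => (Ωn n).indicator (gn n) with hhndef
    have hhnmem : ∀ n, MemLp (hn n) 2 μ := fun n => (hgn n).indicator (hΩn n)
    set Hn : ℕ → Lp (EuclideanSpace ℝ (Fin d)) 2 μ := fun n => (hhnmem n).toLp (hn n) with hHndef
    -- Φ := φ • y as an L² element
    have hΦfmem : MemLp (fun x => φ x • y) 2 μ := by
      refine MemLp.of_bound ((hφc.measurable.smul_const y).aestronglyMeasurable)
        (M * ‖y‖) (Eventually.of_forall fun x => ?_)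
      simp only [norm_smul, Real.norm_eq_abs]
      exact mul_le_mul_of_nonneg_right (hM x) (norm_nonneg y)
    set Φ : Lp (EuclideanSpace ℝ (Fin d)) 2 μ := hΦfmem.toLp _ with hΦdef
    set Rn : ℕ → Lp (EuclideanSpace ℝ (Fin d)) 2 μ := fun n => (hrnmem n).toLp (rn n) with hRndef
    -- pointwise splitting
    have hsplit : ∀ n x, (inner ℝ (gn n x) (W x) : ℝ)
        = inner ℝ (hn n x) (φ x • y) + inner ℝ (gn n x) (rn n x) := by
      intro n x
      have hWx : W x = vn n x + rn n x := by
        simp only [hWdef, hvndef, hrndef, ← add_smul]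
        ring_nf
      rw [hWx, inner_add_right]
      congr 1
      rw [hhndef]
      by_cases hx : x ∈ Ωn n
      · simp [hhndef, hvndef, hχndef, Set.indicator_of_mem hx]
      · simp [hhndef, hvndef, hχndef, Set.indicator_of_notMem hx]
    -- rewrite the weak pairing as a sum of two Hilbert-space inner products
    have hpair : ∀ n, ∫ x, inner ℝ (gn n x) (W x) ∂μ
        = (inner ℝ (Hn n) Φ : ℝ) + inner ℝ (Fn n) (Rn n) := by
      intro n
      rw [hHndef, hΦdef, hRndef, hFndef]
      rw [aux_inner_toLp (hhnmem n) hΦfmem, aux_inner_toLp (hgn n) (hrnmem n)]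
      rw [← integral_add (aux_integrable_inner (hhnmem n) hΦfmem)
        (aux_integrable_inner (hgn n) (hrnmem n))]
      exact integral_congr_ae (Eventually.of_forall fun x => hsplit n x)
    -- ‖Hn n‖ → 0
    have hHnorm : ∀ n, ‖Hn n‖ ^ 2 = ∫ x in Ωn n, ‖gn n x‖ ^ 2 ∂μ := by
      intro n
      rw [hHndef, aux_norm_toLp_sq (hhnmem n), ← integral_indicator (hΩn n)]
      refine integral_congr_ae (Eventually.of_forall fun x => ?_)
      rw [hhndef]
      by_cases hx : x ∈ Ωn n
      · simp [Set.indicator_of_mem hx]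
      · simp [Set.indicator_of_notMem hx]
    have hHn0 : Tendsto (fun n => ‖Hn n‖) atTop (𝓝 0) := by
      have h2 : Tendsto (fun n => ‖Hn n‖ ^ 2) atTop (𝓝 0) := by
        simp_rw [hHnorm]; exact hsmall
      have h3 : Tendsto (fun n => Real.sqrt (‖Hn n‖ ^ 2)) atTop (𝓝 (Real.sqrt 0)) :=
        (Real.continuous_sqrt.continuousAt).tendsto.comp h2
      simpa [Real.sqrt_sq (norm_nonneg _)] using h3
    -- ‖Rn n‖ → 0
    have hRnorm_sq : ∀ n, ‖Rn n‖ ^ 2 = ∫ x, ‖rn n x‖ ^ 2 ∂μ := fun n =>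
      aux_norm_toLp_sq (hrnmem n)
    have hRbound : ∀ n, ‖Rn n‖ ^ 2
        ≤ (M * ‖y‖) ^ 2 * ∫ x, (χn n x - χ x) ^ 2 ∂μ := by
      intro n
      rw [hRnorm_sq n, ← integral_const_mul]
      have hint1 : Integrable (fun x => ‖rn n x‖ ^ 2) μ := by
        have := aux_integrable_inner (hrnmem n) (hrnmem n)
        refine this.congr (Eventually.of_forall fun x => ?_)
        exact real_inner_self_eq_norm_sq _
      have hint2 : Integrable (fun x => (M * ‖y‖) ^ 2 * (χn n x - χ x) ^ 2) μ := by
        refine Integrable.const_mul ?_ _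
        have hmb : MemLp (fun x => (χn n x - χ x) ^ 2) 1 μ := by
          refine MemLp.of_bound ?_ 4 (Eventually.of_forall fun x => ?_)
          · exact (((hχnmeas n).sub hχmeas).pow_const 2).aestronglyMeasurable
          · have h1 : |χn n x - χ x| ≤ 2 := by
              calc |χn n x - χ x| ≤ |χn n x| + |χ x| := abs_sub _ _
                _ ≤ 1 + 1 := add_le_add (hχnbd n x) (hχbd x)
                _ = 2 := by norm_num
            calc ‖(χn n x - χ x) ^ 2‖ = |χn n x - χ x| ^ 2 := by
                  rw [Real.norm_eq_abs, abs_pow]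
              _ ≤ 2 ^ 2 := pow_le_pow_left₀ (abs_nonneg _) h1 2
              _ = 4 := by norm_num
        exact memLp_one_iff_integrable.mp hmb
      refine integral_mono hint1 hint2 fun x => ?_
      have : ‖rn n x‖ ^ 2 = ((χ x - χn n x) * φ x) ^ 2 * ‖y‖ ^ 2 := by
        rw [hrndef]
        simp only [norm_smul, mul_pow, Real.norm_eq_abs, sq_abs]
      rw [this]
      have h1 : ((χ x - χn n x) * φ x) ^ 2 ≤ (χn n x - χ x) ^ 2 * M ^ 2 := by
        rw [mul_pow]
        have h2 : (χ x - χn n x) ^ 2 = (χn n x - χ x) ^ 2 := by ring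
        rw [h2]
        refine mul_le_mul_of_nonneg_left ?_ (sq_nonneg _)
        rw [← sq_abs (φ x)]
        exact pow_le_pow_left₀ (abs_nonneg _) (hM x) 2
      calc ((χ x - χn n x) * φ x) ^ 2 * ‖y‖ ^ 2
          ≤ (χn n x - χ x) ^ 2 * M ^ 2 * ‖y‖ ^ 2 :=
            mul_le_mul_of_nonneg_right h1 (sq_nonneg _)
        _ = (M * ‖y‖) ^ 2 * (χn n x - χ x) ^ 2 := by ring
    have hRn0 : Tendsto (fun n => ‖Rn n‖) atTop (𝓝 0) := by
      have h2 : Tendsto (fun n => ‖Rn n‖ ^ 2) atTop (𝓝 0) := by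
        refine squeeze_zero (fun n => sq_nonneg _) hRbound ?_
        have := hchi.const_mul ((M * ‖y‖) ^ 2)
        rw [mul_zero] at this
        exact this
      have h3 : Tendsto (fun n => Real.sqrt (‖Rn n‖ ^ 2)) atTop (𝓝 (Real.sqrt 0)) :=
        (Real.continuous_sqrt.continuousAt).tendsto.comp h2
      simpa [Real.sqrt_sq (norm_nonneg _)] using h3
    -- the weak pairings tend to 0
    have hto0 : Tendsto (fun n => ∫ x, inner ℝ (gn n x) (W x) ∂μ) atTop (𝓝 (0 : ℝ)) := by
      have hb : Tendsto (fun n => ‖Hn n‖ * ‖Φ‖ + C * ‖Rn n‖) atTop (𝓝 0) := by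
        have h1 := hHn0.mul_const ‖Φ‖
        have h2 := hRn0.const_mul C
        simpa using h1.add h2
      refine squeeze_zero_norm (fun n => ?_) hb
      rw [hpair n]
      calc ‖(inner ℝ (Hn n) Φ : ℝ) + inner ℝ (Fn n) (Rn n)‖
          ≤ ‖(inner ℝ (Hn n) Φ : ℝ)‖ + ‖(inner ℝ (Fn n) (Rn n) : ℝ)‖ := norm_add_le _ _
        _ ≤ ‖Hn n‖ * ‖Φ‖ + ‖Fn n‖ * ‖Rn n‖ := by
            gcongr <;> [exact norm_inner_le_norm _ _; exact norm_inner_le_norm _ _]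
        _ ≤ ‖Hn n‖ * ‖Φ‖ + C * ‖Rn n‖ := by gcongr; exact hC n
    -- hence the limit pairing with gv vanishes
    have hlim := hweak_g W hWmem
    have hgvW : (∫ x, (inner ℝ (gv x) (W x) : ℝ) ∂μ) = 0 := tendsto_nhds_unique hlim hto0
    -- identify this with the inner product of the set integral
    have h1 : (inner ℝ (∫ x in Ω, φ x • gv x ∂μ) y : ℝ)
        = ∫ x in Ω, (inner ℝ (φ x • gv x) y : ℝ) ∂μ := by
      rw [real_inner_comm, ← integral_inner hint y]
      refine integral_congr_ae (Eventually.of_forall fun x => ?_)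
      exact real_inner_comm _ _
    rw [h1, ← hgvW]
    rw [← integral_indicator hΩ]
    refine integral_congr_ae (Eventually.of_forall fun x => ?_)
    by_cases hx : x ∈ Ω
    · simp only [Set.indicator_of_mem hx, hWdef, hχdef, one_mul]
      rw [real_inner_smul_left, real_inner_smul_right]
    · simp only [Set.indicator_of_notMem hx, hWdef, hχdef, zero_mul, zero_smul,
        inner_zero_right]
  constructor
  · intro φ hφ1 hφ2 hφ3
    obtain ⟨M, hM⟩ := hφ2.exists_bound_of_continuous hφ1.continuous
    exact key φ hφ1.continuous M hM
  · have hgvind : Integrable (Ω.indicator gv) μ :=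
      (hgv.integrable one_le_two).indicator hΩ
    have hzero : ∀ᵐ x ∂μ, x ∈ D → Ω.indicator gv x = 0 := by
      refine hD.ae_eq_zero_of_integral_contDiff_smul_eq_zero
        (hgvind.locallyIntegrable.locallyIntegrableOn D) ?_
      intro g gdiff gsupp gtsupp
      obtain ⟨M, hM⟩ := gsupp.exists_bound_of_continuous gdiff.continuous
      have h1 : ∫ x, g x • Ω.indicator gv x ∂μ = ∫ x in Ω, g x • gv x ∂μ := by
        rw [← integral_indicator hΩ]
        refine integral_congr_ae (Eventually.of_forall fun x => ?_)
        by_cases hx : x ∈ Ω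
        · simp [Set.indicator_of_mem hx]
        · simp [Set.indicator_of_notMem hx]
      rw [h1]
      exact key g gdiff.continuous M hM
    have hmemD : ∀ᵐ x ∂μ, x ∈ D := ae_restrict_mem hD.measurableSet
    filter_upwards [hzero, hmemD] with x h1 h2 h3
    have := h1 h2
    rwa [Set.indicator_of_mem h3] at this
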